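/- (Case i = n+2) For 0 ≤ s < n, D_{n+2}(Q_{n,s}) = (-1)^n Q_{n,0} ( Q_{n,s-2}^{p^2} − Q_{n,s-1}^p Q_{n,n-1}^{p^2} + (Q_{n,n-1}^{p^2+p} − Q_{n,n-2}^{p^2}) Q_{n,s} ), with Q_{n,t} = 0 for t < 0. -/

import Mathlib

open MvPolynomial Matrix Finset

/-- `[e₁,…,eₙ]`: the determinant of the matrix with `(k,j)`-entry `x_j^{p^{e_k}}`. -/
noncomputable def bracket (p n : ℕ) (e : Fin n → ℕ) : MvPolynomial (Fin n) (ZMod p) :=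
  (Matrix.of fun k j : Fin n => (X j : MvPolynomial (Fin n) (ZMod p)) ^ p ^ (e k)).det

/-- `L_n = [0,1,…,n-1]`. -/
noncomputable def Ln (p n : ℕ) : MvPolynomial (Fin n) (ZMod p) :=
  bracket p n (fun k => (k : ℕ))

/-- `L_{n,s} = [0,1,…,ŝ,…,n]` (entry `s` omitted from `0,…,n`). -/
noncomputable def Lns (p n s : ℕ) : MvPolynomial (Fin n) (ZMod p) :=
  bracket p n (fun k => if (k : ℕ) < s then (k : ℕ) else (k : ℕ) + 1)

/-- The `i`-th primitive Steenrod–Milnor operation, as the `F_p`-derivation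
with `D_i(x_j) = x_j^{p^i}`. -/
noncomputable def Dop (p n i : ℕ) :
    Derivation (ZMod p) (MvPolynomial (Fin n) (ZMod p)) (MvPolynomial (Fin n) (ZMod p)) :=
  MvPolynomial.mkDerivation (ZMod p) (fun j : Fin n => (X j) ^ p ^ i)

/-- The action of a matrix `g` on `P_n` by linear substitution of the variables. -/
noncomputable def act (p n : ℕ) (g : Matrix (Fin n) (Fin n) (ZMod p)) :
    MvPolynomial (Fin n) (ZMod p) →ₐ[ZMod p] MvPolynomial (Fin n) (ZMod p) :=
  MvPolynomial.aeval (fun j : Fin n => ∑ k : Fin n, g j k • (X k : MvPolynomial (Fin n) (ZMod p)))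

/-! Write `b_t = (-1)^(n+t+1) Q_{n,t}`. The `(n+1) × (n+1)` matrix with rows
`(x_1^{p^i}, …, x_n^{p^i}, x_j^{p^i})`, `i ≤ n`, has two equal columns; expanding its
determinant along the last one and dividing by `L_n` gives `y^{p^n} = ∑_{t<n} b_t y^{p^t}`
for `y = x_j`. Applying the Frobenius twice rewrites `D_{n+2} y = y^{p^{n+2}}` in the same
basis, while `D_{n+2}` applied to the relation kills every `y^{p^t}` with `t ≥ 1`, so
`∑_t D_{n+2}(b_t) y^{p^t} = -b_0 y^{p^{n+2}}`. As `L_n ≠ 0`, the vectors `(x_j^{p^t})_j`,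
`t < n`, are linearly independent, so the coefficients can be compared. -/

section Frobenius

variable {R : Type*} [CommRing R]

/-- When `y ^ p ^ n = ∑ t < n, b t * y ^ p ^ t`, `powCoeff p n b k t` is the coefficient of
`y ^ p ^ t` in `y ^ p ^ (n + k)`. -/
def powCoeff (p n : ℕ) (b : ℤ → R) : ℕ → ℤ → R
  | 0 => b
  | k + 1 => fun t => powCoeff p n b k (t - 1) ^ p + powCoeff p n b k (n - 1) ^ p * b t

variable {p n : ℕ} [Fact p.Prime] {b : ℤ → R}

theorem powCoeff_of_neg (hb0 : ∀ t < 0, b t = 0) (k : ℕ) {t : ℤ} (ht : t < 0) :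
    powCoeff p n b k t = 0 := by
  induction k generalizing t with
  | zero => exact hb0 t ht
  | succ k ih =>
    simp [powCoeff, ih (show t - 1 < 0 by omega), hb0 t ht, (Fact.out : p.Prime).ne_zero]

variable [CharP R p]

theorem powCoeff_two (t : ℤ) :
    powCoeff p n b 2 t = b (t - 2) ^ p ^ 2 + b (n - 1) ^ p ^ 2 * b (t - 1) ^ p +
      (b (n - 2) ^ p ^ 2 + b (n - 1) ^ (p ^ 2 + p)) * b t := by
  simp only [powCoeff, add_pow_char, mul_pow, ← pow_mul, sub_sub]
  ring_nf

variable (p)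

theorem pow_char_pow_succ_eq_sum {m : ℕ} {y : R} {a : ℤ → R} (ha : a (-1) = 0)
    (hb : y ^ p ^ n = ∑ t ∈ range n, b t * y ^ p ^ t)
    (hm : y ^ p ^ m = ∑ t ∈ range n, a t * y ^ p ^ t) :
    y ^ p ^ (m + 1) = ∑ t ∈ range n, (a (t - 1) ^ p + a (n - 1) ^ p * b t) * y ^ p ^ t := by
  have hshift := (sum_range_succ' (fun t : ℕ => a (t - 1) ^ p * y ^ p ^ t) n).symm.trans
    (sum_range_succ (fun t : ℕ => a (t - 1) ^ p * y ^ p ^ t) n)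
  simp only [Nat.cast_add, Nat.cast_one, add_sub_cancel_right, Nat.cast_zero, zero_sub, ha,
    zero_pow (Fact.out : p.Prime).ne_zero, zero_mul, add_zero] at hshift
  calc y ^ p ^ (m + 1) = (∑ t ∈ range n, a t * y ^ p ^ t) ^ p := by
        rw [← hm, pow_succ, pow_mul]
    _ = ∑ t ∈ range n, a t ^ p * y ^ p ^ (t + 1) := by
      simp only [sum_pow_char, mul_pow, ← pow_mul, ← pow_succ]
    _ = _ := by
      rw [hshift, hb, mul_sum, ← sum_add_distrib]
      exact sum_congr rfl fun t _ => by ring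

theorem pow_char_pow_add_eq_sum {y : R} (hb0 : ∀ t < 0, b t = 0)
    (hb : y ^ p ^ n = ∑ t ∈ range n, b t * y ^ p ^ t) (k : ℕ) :
    y ^ p ^ (n + k) = ∑ t ∈ range n, powCoeff p n b k t * y ^ p ^ t := by
  induction k with
  | zero => exact hb
  | succ k ih => exact pow_char_pow_succ_eq_sum p (powCoeff_of_neg hb0 k (by norm_num)) hb ih

end Frobenius

namespace Derivation

variable {A R : Type*} [CommRing A] [CommRing R] [Algebra A R] (p : ℕ) [CharP R p]
  (D : Derivation A R R)

theorem map_pow_char_pow_eq_zero (y : R) {k : ℕ} (hk : k ≠ 0) : D (y ^ p ^ k) = 0 := by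
  rw [leibniz_pow, nsmul_eq_mul, Nat.cast_pow, CharP.cast_eq_zero, zero_pow hk, zero_mul]

theorem sum_map_mul_pow_char_pow {n : ℕ} (hn : n ≠ 0) {y : R} {b : ℕ → R}
    (hb : y ^ p ^ n = ∑ t ∈ range n, b t * y ^ p ^ t) :
    ∑ t ∈ range n, D (b t) * y ^ p ^ t = -(b 0 * D y) := by
  obtain ⟨n, rfl⟩ := Nat.exists_eq_succ_of_ne_zero hn
  calc ∑ t ∈ range (n + 1), D (b t) * y ^ p ^ t
      = ∑ t ∈ range (n + 1), D (b t * y ^ p ^ t) - b 0 * D y := by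
        simp only [sum_range_succ' _ n, leibniz, smul_eq_mul,
          map_pow_char_pow_eq_zero p D y (Nat.succ_ne_zero _), pow_zero, pow_one, mul_zero,
          zero_add, mul_comm (y ^ _)]
        ring
    _ = -(b 0 * D y) := by rw [← map_sum, ← hb, map_pow_char_pow_eq_zero p D y hn, zero_sub]

end Derivation

theorem Matrix.sum_neg_one_pow_mul_det_submatrix_succAbove_eq_zero {R : Type*} [CommRing R]
    {n : ℕ} (N : Matrix (Fin (n + 1)) (Fin n) R) (j : Fin n) :
    ∑ i : Fin (n + 1), (-1) ^ (i : ℕ) * N i j * (N.submatrix i.succAbove id).det = 0 := by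
  let A : Matrix (Fin (n + 1)) (Fin (n + 1)) R := Matrix.of fun i => Fin.snoc (N i) (N i j)
  have hA : A.det = 0 :=
    Matrix.det_zero_of_column_eq (Fin.castSucc_lt_last j).ne fun i => by simp [A]
  have hminor (i : Fin (n + 1)) :
      A.submatrix i.succAbove Fin.castSucc = N.submatrix i.succAbove id := by
    ext; simp [A]
  rw [Matrix.det_succ_column A (Fin.last n)] at hA
  have : (-1 : R) ^ n *
      ∑ i : Fin (n + 1), (-1) ^ (i : ℕ) * N i j * (N.submatrix i.succAbove id).det = 0 := by
    rw [← hA, mul_sum]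
    refine sum_congr rfl fun i _ => ?_
    rw [Fin.succAbove_last, hminor]
    simp only [A, Fin.val_last, pow_add, Matrix.of_apply, Fin.snoc_last]
    ring
  simpa using this

theorem MvPolynomial.prod_univ_X_pow_eq_monomial {σ R : Type*} [Fintype σ] [CommSemiring R]
    (f : σ → ℕ) :
    ∏ j, (X j : MvPolynomial σ R) ^ f j = monomial (Finsupp.equivFunOnFinite.symm f) 1 := by
  rw [monomial_eq, C_1, one_mul, Finsupp.prod_fintype _ _ fun _ => pow_zero _]
  rfl

theorem Int.cast_units_pow_char_pow {R : Type*} [CommRing R] (p : ℕ) [Fact p.Prime] [CharP R p]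
    (u : ℤˣ) (k : ℕ) : ((u : ℤ) : R) ^ p ^ k = u := by
  rcases Int.units_eq_one_or u with rfl | rfl <;> simp [neg_one_pow_char_pow]

theorem Int.cast_units_pow_char {R : Type*} [CommRing R] (p : ℕ) [Fact p.Prime] [CharP R p]
    (u : ℤˣ) : ((u : ℤ) : R) ^ p = u := by
  simpa using Int.cast_units_pow_char_pow (R := R) p u 1

section Moore

variable (p n : ℕ)

local notation "P" => MvPolynomial (Fin n) (ZMod p)

theorem bracket_succAbove_last : bracket p n (fun k => (Fin.last n).succAbove k) = Ln p n := by
  simp [Ln]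

theorem bracket_castSucc_succAbove (s : Fin n) :
    bracket p n (fun k => (s.castSucc.succAbove k : ℕ)) = Lns p n s := by
  unfold Lns
  congr 1
  funext k
  split_ifs with h
  · rw [Fin.succAbove_castSucc_of_lt _ _ h, Fin.val_castSucc]
  · rw [Fin.succAbove_castSucc_of_le _ _ (not_lt.mp h), Fin.val_succ]

variable [Fact p.Prime]

theorem Ln_ne_zero : Ln p n ≠ 0 := by
  have hp := (Fact.out : p.Prime).two_le
  let d := Finsupp.equivFunOnFinite.symm fun j : Fin n => p ^ (j : ℕ)
  have hd : coeff d (Ln p n) = 1 := by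
    rw [Ln, bracket, Matrix.det_apply', coeff_sum, sum_eq_single 1]
    · simp [prod_univ_X_pow_eq_monomial, d]
    · intro σ _ hσ
      simp only [Matrix.of_apply, prod_univ_X_pow_eq_monomial, ← map_intCast (C : ZMod p →+* P),
        coeff_C_mul, coeff_monomial, d]
      rw [if_neg, mul_zero]
      intro h
      refine hσ (Equiv.ext fun j => Fin.ext ?_)
      exact Nat.pow_right_injective hp (congrFun (Finsupp.equivFunOnFinite.symm.injective h) j)
    · simp
  intro h
  simp [h] at hd

theorem eq_zero_of_forall_sum_mul_X_pow_pow_eq_zero {v : ℕ → P}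
    (h : ∀ j, ∑ t ∈ range n, v t * X j ^ p ^ t = 0) {t : ℕ} (ht : t < n) : v t = 0 := by
  have : (fun t : Fin n => v t) = 0 := by
    refine Matrix.eq_zero_of_vecMul_eq_zero (Ln_ne_zero p n) (funext fun j => ?_)
    simpa [vecMul, dotProduct, Fin.sum_univ_eq_sum_range (fun t => v t * X j ^ p ^ t)] using h j
  exact congrFun this ⟨t, ht⟩

theorem X_pow_pow_eq_sum (Q : ℤ → P) (hQ : ∀ s < n, Lns p n s = Ln p n * Q s) (j : Fin n) :
    X j ^ p ^ n = ∑ t ∈ range n, ((t + n + 1 : ℤ).negOnePow : P) * Q t * X j ^ p ^ t := by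
  have h := Matrix.sum_neg_one_pow_mul_det_submatrix_succAbove_eq_zero
    (Matrix.of fun (i : Fin (n + 1)) (k : Fin n) => (X k : P) ^ p ^ (i : ℕ)) j
  have hminor (i : Fin (n + 1)) : ((Matrix.of fun (i : Fin (n + 1)) (k : Fin n) =>
      (X k : P) ^ p ^ (i : ℕ)).submatrix i.succAbove id).det =
      bracket p n (fun k => (i.succAbove k : ℕ)) := rfl
  simp only [hminor, Fin.sum_univ_castSucc, bracket_castSucc_succAbove, bracket_succAbove_last,
    hQ _ (Fin.is_lt _), Matrix.of_apply, Fin.val_castSucc, Fin.val_last] at h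
  refine mul_left_cancel₀ (Ln_ne_zero p n) ?_
  have hsq : (-1 : P) ^ n * (-1) ^ n = 1 := by rw [← pow_add, Even.neg_one_pow ⟨n, rfl⟩]
  calc Ln p n * X j ^ p ^ n
      = -(-1) ^ n * ∑ t : Fin n, (-1) ^ (t : ℕ) * X j ^ p ^ (t : ℕ) * (Ln p n * Q t) := by
        linear_combination ((-1) ^ n : P) * h - X j ^ p ^ n * Ln p n * hsq
    _ = _ := by
      rw [mul_sum, mul_sum, ← Fin.sum_univ_eq_sum_range]
      refine sum_congr rfl fun t _ => ?_
      rw [show ((t : ℕ) + n + 1 : ℤ) = ((t + n + 1 : ℕ) : ℤ) by push_cast; rfl,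
        Int.cast_negOnePow_natCast, pow_add, pow_add]
      ring

end Moore

section Dickson

variable (p n : ℕ)

local notation "P" => MvPolynomial (Fin n) (ZMod p)

theorem Dop_X (i : ℕ) (j : Fin n) : Dop p n i (X j) = X j ^ p ^ i :=
  mkDerivation_X _ _ _

variable [Fact p.Prime]

theorem Dop_add_eq_of_forall_X_pow_pow_eq_sum (hn : n ≠ 0) {b : ℤ → P}
    (hb0 : ∀ t < 0, b t = 0) (hb : ∀ j, X j ^ p ^ n = ∑ t ∈ range n, b t * X j ^ p ^ t)
    (k : ℕ) {s : ℕ} (hs : s < n) :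
    Dop p n (n + k) (b s) = -(b 0 * powCoeff p n b k s) := by
  have key := eq_zero_of_forall_sum_mul_X_pow_pow_eq_zero p n
    (v := fun t => Dop p n (n + k) (b t) + b 0 * powCoeff p n b k t) (fun j => ?_) hs
  · exact eq_neg_of_add_eq_zero_left key
  calc _ = ∑ t ∈ range n, Dop p n (n + k) (b t) * X j ^ p ^ t +
        b 0 * ∑ t ∈ range n, powCoeff p n b k t * X j ^ p ^ t := by
        rw [mul_sum, ← sum_add_distrib]
        exact sum_congr rfl fun t _ => by ring
    _ = 0 := by
      rw [Derivation.sum_map_mul_pow_char_pow p _ hn (b := fun t : ℕ => b t) (hb j), Dop_X,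
        ← pow_char_pow_add_eq_sum p hb0 (hb j), Nat.cast_zero]
      ring

end Dickson

theorem stmt12 (p n : ℕ) [Fact p.Prime] (hn : 1 ≤ n)
    (Q : ℤ → MvPolynomial (Fin n) (ZMod p))
    (hQneg : ∀ t : ℤ, t < 0 → Q t = 0)
    (hQ : ∀ s : ℕ, s < n → Lns p n s = Ln p n * Q s)
    (s : ℕ) (hs : s < n) :
    Dop p n (n + 2) (Q s) =
      (-1 : MvPolynomial (Fin n) (ZMod p)) ^ n * Q 0 *
        ((Q ((s : ℤ) - 2)) ^ p ^ 2 - (Q ((s : ℤ) - 1)) ^ p * (Q ((n : ℤ) - 1)) ^ p ^ 2 +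
          ((Q ((n : ℤ) - 1)) ^ (p ^ 2 + p) - (Q ((n : ℤ) - 2)) ^ p ^ 2) * Q s) := by
  have key := Dop_add_eq_of_forall_X_pow_pow_eq_sum p n (by omega)
    (b := fun t => ((t + n + 1).negOnePow : MvPolynomial (Fin n) (ZMod p)) * Q t)
    (fun t ht => by rw [hQneg t ht, mul_zero]) (X_pow_pow_eq_sum p n Q hQ) 2 hs
  rw [powCoeff_two] at key
  set u := ((s : ℤ) + n + 1).negOnePow
  have h2 : ((s : ℤ) - 2 + n + 1).negOnePow = u := by
    rw [Int.negOnePow_eq_iff]; exact ⟨-1, by ring⟩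
  have h1 : ((s : ℤ) - 1 + n + 1).negOnePow = -u := by
    rw [show (s : ℤ) - 1 + n + 1 = s + n + 1 - 1 by ring, Int.negOnePow_sub, Int.negOnePow_one,
      mul_neg_one]
  have hn1 : ((n : ℤ) - 1 + n + 1).negOnePow = 1 := Int.negOnePow_even _ ⟨n, by ring⟩
  have hn2 : ((n : ℤ) - 2 + n + 1).negOnePow = -1 := Int.negOnePow_odd _ ⟨n - 1, by ring⟩
  have h0 : (((0 : ℤ) + n + 1).negOnePow : MvPolynomial (Fin n) (ZMod p)) = -(-1) ^ n := by
    rw [show (0 : ℤ) + n + 1 = ((n + 1 : ℕ) : ℤ) by push_cast; ring,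
      Int.cast_negOnePow_natCast, pow_succ, mul_neg_one]
  simp only [h2, h1, hn1, hn2, h0, Derivation.leibniz, Derivation.map_intCast, mul_pow,
    Int.cast_units_pow_char_pow, Int.cast_units_pow_char, smul_eq_mul, mul_zero, add_zero] at key
  simp only [Units.val_one, Units.val_neg, Int.cast_one, Int.cast_neg] at key
  have hu : IsUnit ((u : ℤ) : MvPolynomial (Fin n) (ZMod p)) := u.isUnit.map (Int.castRingHom _)
  refine sub_eq_zero.mp (hu.mul_right_eq_zero.mp ?_)
  linear_combination key
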